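/- arXiv:2010.01375 — 2 statements merged into one kernel-verified Lean document; each statement's English description precedes it below -/
import Mathlib

section
/- Let Υ ⊆ ℝ² have the downward hereditary property: if (λ̄, μ̄) ∈ Υ and (λ, μ) satisfies λ ≤ λ̄, μ ≤ μ̄, and (λ, μ) ∉ Λ where Λ is a fixed subset of ℝ², then (λ, μ) ∈ Υ. Suppose also Λ ⊆ closure(int Υ). Then for every (λ̄, μ̄) ∈ int(Υ), the whole quadrant {(λ, μ) : λ ≤ λ̄, μ ≤ μ̄} is contained in closure(int Υ). -/
open Metric Set

theorem quadrant_subset_closure_interior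
    (Y Λ : Set (ℝ × ℝ))
    (hered : ∀ p ∈ Y, ∀ q : ℝ × ℝ, q.1 ≤ p.1 → q.2 ≤ p.2 → q ∉ Λ → q ∈ Y)
    (hΛ : Λ ⊆ closure (interior Y)) :
    ∀ p ∈ interior Y,
      {q : ℝ × ℝ | q.1 ≤ p.1 ∧ q.2 ≤ p.2} ⊆ closure (interior Y) := by
  intro p hp q hq
  obtain ⟨hq1, hq2⟩ := hq
  have hpY : p ∈ Y := interior_subset hp
  have strict : ∀ r : ℝ × ℝ, r.1 < p.1 → r.2 < p.2 → r ∈ closure (interior Y) := by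
    intro r hr1 hr2
    rw [_root_.mem_closure_iff]
    intro O hO hrO
    have hopen : IsOpen (O ∩ {s : ℝ × ℝ | s.1 < p.1 ∧ s.2 < p.2}) :=
      hO.inter ((isOpen_lt continuous_fst continuous_const).inter
        (isOpen_lt continuous_snd continuous_const))
    have hrmem : r ∈ O ∩ {s : ℝ × ℝ | s.1 < p.1 ∧ s.2 < p.2} := ⟨hrO, hr1, hr2⟩
    obtain ⟨ε, hε, hball⟩ := Metric.isOpen_iff.1 hopen r hrmem
    by_cases hcase : ∃ s ∈ ball r ε, s ∈ Λ
    · obtain ⟨s, hs, hsΛ⟩ := hcase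
      have h1 := hΛ hsΛ
      rw [_root_.mem_closure_iff] at h1
      obtain ⟨t, htb, htY⟩ := h1 (ball r ε) isOpen_ball hs
      exact ⟨t, (hball htb).1, htY⟩
    · push_neg at hcase
      have hsubY : ball r ε ⊆ Y := by
        intro s hs
        have hs' := hball hs
        exact hered p hpY s hs'.2.1.le hs'.2.2.le (hcase s hs)
      have hri : r ∈ interior Y := by
        rw [mem_interior]
        exact ⟨ball r ε, hsubY, isOpen_ball, mem_ball_self hε⟩
      exact ⟨r, hrO, hri⟩
  have htend : Filter.Tendsto (fun n : ℕ => ((q.1 - 1/(n+1), q.2 - 1/(n+1)) : ℝ × ℝ))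
      Filter.atTop (nhds q) := by
    have h1 : Filter.Tendsto (fun n : ℕ => (1:ℝ)/(n+1)) Filter.atTop (nhds 0) :=
      tendsto_one_div_add_atTop_nhds_zero_nat
    have h2 := (tendsto_const_nhds (x := q.1)).sub h1
    have h3 := (tendsto_const_nhds (x := q.2)).sub h1
    have := h2.prodMk_nhds h3
    simpa using this
  refine isClosed_closure.mem_of_tendsto htend (Filter.Eventually.of_forall ?_)
  intro n
  have hpos : (0:ℝ) < 1/(n+1) := by positivity
  exact strict _ (by simp only []; linarith) (by simp only []; linarith)
end

section
/- Picone's identity/inequality for the p-Laplacian: for u, v differentiable with v > 0 and u ≥ 0 on a domain, one has |∇u|^p − |∇v|^{p−2}∇v · ∇(u^p / v^{p−1}) ≥ 0 pointwise. -/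
/-!
Write `w = u / v`, `b = ‖∇v‖` and `s = w b`. By Cauchy–Schwarz the left-hand side is at most
`p s^(p-1) ‖∇u‖ - (p-1) s^p`, and Young's inequality with exponents `p` and `p / (p - 1)`
bounds this by `‖∇u‖^p`.
-/

theorem mul_rpow_sub_one_mul_le_add {p s a : ℝ} (hp : 1 < p) (hs : 0 ≤ s) (ha : 0 ≤ a) :
    p * s ^ (p - 1) * a ≤ a ^ p + (p - 1) * s ^ p := by
  have hsp : (s ^ (p - 1)) ^ (p / (p - 1)) = s ^ p := by
    rw [← Real.rpow_mul hs, mul_div_cancel₀ _ (sub_pos.2 hp).ne']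
  have hpq : p.HolderConjugate (p / (p - 1)) := Real.HolderConjugate.conjExponent hp
  have young := Real.young_inequality_of_nonneg ha (Real.rpow_nonneg hs (p - 1)) hpq
  rw [hsp] at young
  calc p * s ^ (p - 1) * a = p * (a * s ^ (p - 1)) := by ring
    _ ≤ p * (a ^ p / p + s ^ p / (p / (p - 1))) := by gcongr
    _ = a ^ p + (p - 1) * s ^ p := by field_simp

theorem picone_scalar_le {p w a b t : ℝ} (hp : 1 < p) (hw : 0 ≤ w) (ha : 0 ≤ a)
    (hb : 0 ≤ b) (ht : t ≤ b * a) :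
    b ^ (p - 2) * (p * w ^ (p - 1) * t + (1 - p) * w ^ p * b ^ 2) ≤ a ^ p := by
  rcases hb.eq_or_lt with rfl | hb
  · -- `0 ^ (p - 2)` is `1` at `p = 2`; only its sign matters here.
    have hcoef : 0 ≤ (0 : ℝ) ^ (p - 2) * (p * w ^ (p - 1)) := by positivity
    have : (0 : ℝ) ^ (p - 2) * (p * w ^ (p - 1)) * t ≤ 0 :=
      mul_nonpos_of_nonneg_of_nonpos hcoef (by simpa using ht)
    nlinarith [Real.rpow_nonneg ha p]
  have hb1 : b ^ (p - 2) * b = b ^ (p - 1) := by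
    rw [← Real.rpow_add_one hb.ne']; ring_nf
  have hb2 : b ^ (p - 2) * b ^ 2 = b ^ p := by
    rw [← Real.rpow_natCast, ← Real.rpow_add hb]; norm_num
  calc b ^ (p - 2) * (p * w ^ (p - 1) * t + (1 - p) * w ^ p * b ^ 2)
      ≤ b ^ (p - 2) * (p * w ^ (p - 1) * (b * a) + (1 - p) * w ^ p * b ^ 2) := by gcongr
    _ = p * (w * b) ^ (p - 1) * a - (p - 1) * (w * b) ^ p := by
      rw [Real.mul_rpow hw hb.le, Real.mul_rpow hw hb.le, ← hb1, ← hb2]; ring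
    _ ≤ a ^ p := by linarith [mul_rpow_sub_one_mul_le_add hp (mul_nonneg hw hb.le) ha]

theorem picone_inequality_general
    (N : ℕ) (p : ℝ) (hp : 1 < p) (Ω : Set (EuclideanSpace ℝ (Fin N)))
    (u v : EuclideanSpace ℝ (Fin N) → ℝ)
    (hu0 : ∀ x ∈ Ω, 0 ≤ u x) (hv0 : ∀ x ∈ Ω, 0 < v x) :
    ∀ x ∈ Ω,
      ‖gradient v x‖ ^ (p - 2) *
        (inner ℝ (gradient v x)
          ((p * u x ^ (p - 1) * v x ^ (1 - p)) • gradient u x +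
            ((1 - p) * u x ^ p * v x ^ (-p)) • gradient v x) : ℝ)
        ≤ ‖gradient u x‖ ^ p := by
  intro x hx
  have hv := hv0 x hx
  have ratio_rpow (q : ℝ) : (u x / v x) ^ q = u x ^ q * v x ^ (-q) := by
    rw [Real.div_rpow (hu0 x hx) hv.le, Real.rpow_neg hv.le, div_eq_mul_inv]
  rw [inner_add_right, real_inner_smul_right, real_inner_smul_right, real_inner_self_eq_norm_sq]
  convert picone_scalar_le hp (div_nonneg (hu0 x hx) hv.le) (norm_nonneg _)
    (norm_nonneg _) (real_inner_le_norm (gradient v x) (gradient u x)) using 3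
  · rw [ratio_rpow, neg_sub]; ring
  · rw [ratio_rpow]; ring

theorem picone_inequality
    (N : ℕ) (p : ℝ) (hp : 1 < p) (Ω : Set (EuclideanSpace ℝ (Fin N)))
    (u v : EuclideanSpace ℝ (Fin N) → ℝ)
    (hu : Differentiable ℝ u) (hv : Differentiable ℝ v)
    (hu0 : ∀ x ∈ Ω, 0 ≤ u x) (hv0 : ∀ x ∈ Ω, 0 < v x) :
    ∀ x ∈ Ω,
      ‖gradient v x‖ ^ (p - 2) *
        (inner ℝ (gradient v x)
          ((p * u x ^ (p - 1) * v x ^ (1 - p)) • gradient u x +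
            ((1 - p) * u x ^ p * v x ^ (-p)) • gradient v x) : ℝ)
        ≤ ‖gradient u x‖ ^ p :=
  picone_inequality_general N p hp Ω u v hu0 hv0
end
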